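/- Let $K$ be a valid column (strictly decreasing sequence of naturals) and suppose $a \leq z$, where reverse insertion is defined when some entry of $K$ is $\leq$ the inserted value. If reverse-inserting $a$ into $K$ yields bumped entry $\hat a$ and column $K'$, and reverse-inserting $z$ into $K'$ yields bumped entry $\hat z$ and column $K''$, then $\hat a \leq \hat z$. -/
import Mathlib


/-- Helper for reverse dual RSK insertion, working on the reversed column
(bottom to top): replace the first entry `k ≤ z` encountered by `z`, bumping `k`. -/
def revFind (z : ℕ) : List ℕ → Option (ℕ × List ℕ)
  | [] => none
  | k :: K =>
    if k ≤ z then some (k, z :: K)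
    else (revFind z K).map fun p => (p.1, k :: p.2)

/-- Reverse dual RSK insertion of `z` into a column `K` (listed top to bottom):
find the bottommost entry `ẑ ≤ z`, replace it by `z` and bump out `ẑ`.  Returns
`some (ẑ, K')` if such an entry exists, `none` otherwise. -/
def revInsert (z : ℕ) (K : List ℕ) : Option (ℕ × List ℕ) :=
  (revFind z K.reverse).map fun p => (p.1, p.2.reverse)

lemma revFind_le {z k : ℕ} {L L' : List ℕ} (h : revFind z L = some (k, L')) : k ≤ z := by
  induction L generalizing L' with
  | nil => simp [revFind] at h
  | cons x T ih =>
    simp only [revFind] at h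
    split at h
    · simp_all
    · rcases Option.map_eq_some_iff.1 h with ⟨p, hp, he⟩
      cases he
      exact ih hp

lemma revFind_mono {a z ahat zhat : ℕ} {L L' L'' : List ℕ} (haz : a ≤ z)
    (h1 : revFind a L = some (ahat, L')) (h2 : revFind z L' = some (zhat, L'')) :
    ahat ≤ zhat := by
  induction L generalizing L' L'' with
  | nil => simp [revFind] at h1
  | cons k T ih =>
    simp only [revFind] at h1
    split at h1
    case isTrue hk =>
      obtain ⟨rfl, rfl⟩ : k = ahat ∧ a :: T = L' := by simpa using h1
      simp only [revFind, if_pos haz] at h2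
      obtain ⟨rfl, -⟩ : a = zhat ∧ z :: T = L'' := by simpa using h2
      exact hk
    case isFalse hk =>
      rcases Option.map_eq_some_iff.1 h1 with ⟨p, hp, he⟩
      injection he with he1 he2
      cases he1
      subst he2
      simp only [revFind] at h2
      split at h2
      case isTrue hkz =>
        obtain ⟨rfl, -⟩ : k = zhat ∧ z :: p.2 = L'' := by simpa using h2
        exact le_trans (revFind_le hp) (le_of_lt (lt_of_not_ge hk))
      case isFalse hkz =>
        rcases Option.map_eq_some_iff.1 h2 with ⟨q, hq, he'⟩
        injection he' with he1' he2'
        cases he1'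
        exact ih (by rw [← Prod.mk.eta (p := p)] at hp; exact hp) hq

/-- if `a ≤ z`, reverse-inserting `a` into a valid column `K` gives
`(â, K')`, and reverse-inserting `z` into `K'` gives `(ẑ, K'')`, then `â ≤ ẑ`. -/
theorem stmt5 (a z ahat zhat : ℕ) (K K' K'' : List ℕ) (hK : K.Chain' (· > ·))
    (haz : a ≤ z) (h1 : revInsert a K = some (ahat, K'))
    (h2 : revInsert z K' = some (zhat, K'')) : ahat ≤ zhat := by
  rcases Option.map_eq_some_iff.1 h1 with ⟨p, hp, he⟩
  injection he with he1 he2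
  rcases Option.map_eq_some_iff.1 h2 with ⟨q, hq, he'⟩
  injection he' with he1' he2'
  subst he1 he1'
  rw [← he2, List.reverse_reverse, ← Prod.mk.eta (p := p)] at hq
  exact revFind_mono haz (by rw [← Prod.mk.eta (p := p)] at hp; exact hp)
    (by rw [← Prod.mk.eta (p := q)] at hq; exact hq)
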